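/- arXiv:1709.10052 — 5 statements merged into one kernel-verified Lean document; each statement's English description precedes it below -/
import Mathlib

section
/- For any alphabet A and any k ∈ ℕ, the equivalence classes of the relation ≡_k^SU on A* are exactly the languages of the form A*w with |w| = k and the singletons {w} with |w| ≤ k−1. -/
/-- `SUk k` : finite Boolean combinations of the languages `A*w` with `|w| ≤ k`. -/
inductive SUk {A : Type*} (k : ℕ) : Set (List A) → Prop
  | base (w : List A) : w.length ≤ k → SUk k {u : List A | ∃ v : List A, u = v ++ w}
  | union {L₁ L₂ : Set (List A)} : SUk k L₁ → SUk k L₂ → SUk k (L₁ ∪ L₂)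
  | inter {L₁ L₂ : Set (List A)} : SUk k L₁ → SUk k L₂ → SUk k (L₁ ∩ L₂)
  | compl {L : Set (List A)} : SUk k L → SUk k Lᶜ

/-- `w ≡ₖ w'` : `w` and `w'` belong to exactly the same languages of `SUk k`. -/
def eqSU {A : Type*} (k : ℕ) (w w' : List A) : Prop :=
  ∀ L : Set (List A), SUk k L → (w ∈ L ↔ w' ∈ L)

/-- Among suffixes of a common word, the shorter one is a suffix of the longer one. -/
lemma suffix_trans_iff {A : Type*} {s w v : List A} (hs : s <:+ w)
    (hv : v.length ≤ s.length) : v <:+ w ↔ v <:+ s := by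
  constructor
  · intro hvw
    rcases List.suffix_or_suffix_of_suffix hvw hs with h | h
    · exact h
    · have : s = v := h.eq_of_length (le_antisymm h.length_le hv)
      exact this ▸ List.suffix_rfl
  · intro h; exact h.trans hs

lemma eqSU_iff {A : Type*} (k : ℕ) (w w' : List A) :
    eqSU k w w' ↔ ∀ v : List A, v.length ≤ k → (v <:+ w ↔ v <:+ w') := by
  constructor
  · intro h v hv
    have := h _ (SUk.base v hv)
    simpa [List.IsSuffix, Set.mem_setOf_eq, eq_comm] using this
  · intro h L hL
    induction hL with
    | base v hv => simpa [List.IsSuffix, Set.mem_setOf_eq, eq_comm] using h v hv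
    | union h1 h2 ih1 ih2 => simp [Set.mem_union, ih1, ih2]
    | inter h1 h2 ih1 ih2 => simp [Set.mem_inter_iff, ih1, ih2]
    | compl h ih => simp [Set.mem_compl_iff, ih]

lemma class_of_long {A : Type*} {k : ℕ} {w : List A} (h : k ≤ w.length) :
    {u : List A | eqSU k w u} = {u : List A | (w.drop (w.length - k)) <:+ u} := by
  set s := w.drop (w.length - k) with hs
  have hsw : s <:+ w := List.drop_suffix _ _
  have hslen : s.length = k := by
    simp [hs, Nat.sub_sub_self h]
  ext u
  simp only [Set.mem_setOf_eq, eqSU_iff]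
  constructor
  · intro hu
    exact (hu s (le_of_eq hslen)).mp hsw
  · intro hsu v hv
    rw [suffix_trans_iff hsw (hslen ▸ hv), suffix_trans_iff hsu (hslen ▸ hv)]

lemma class_of_short {A : Type*} {k : ℕ} {w : List A} (h : w.length < k) :
    {u : List A | eqSU k w u} = {w} := by
  ext u
  simp only [Set.mem_setOf_eq, Set.mem_singleton_iff]
  constructor
  · intro hu
    rw [eqSU_iff] at hu
    have hwu : w <:+ u := (hu w h.le).mp List.suffix_rfl
    by_contra hne
    have hlt : w.length < u.length := by
      rcases lt_or_eq_of_le hwu.length_le with h' | h'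
      · exact h'
      · exact absurd (hwu.eq_of_length h').symm hne
    set v := u.drop (u.length - (w.length + 1)) with hv
    have hvu : v <:+ u := List.drop_suffix _ _
    have hvlen : v.length = w.length + 1 := by
      simp [hv, Nat.sub_sub_self hlt]
    have hvw : v <:+ w := (hu v (by omega)).mpr hvu
    have := hvw.length_le
    omega
  · rintro rfl
    intro L _; rfl

/-- The equivalence classes of `≡ₖ` on `A*` are exactly the languages `A*w` with
`|w| = k` and the singletons `{w}` with `|w| ≤ k - 1`. -/
theorem eqSU_classes (A : Type*) [Fintype A] (k : ℕ) (C : Set (List A)) :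
    (∃ w₀ : List A, C = {u : List A | eqSU k w₀ u}) ↔
      ((∃ w : List A, w.length = k ∧ C = {u : List A | ∃ v : List A, u = v ++ w}) ∨
       (∃ w : List A, w.length < k ∧ C = {w})) := by
  constructor
  · rintro ⟨w₀, rfl⟩
    rcases lt_or_ge w₀.length k with h | h
    · right; exact ⟨w₀, h, class_of_short h⟩
    · left
      refine ⟨w₀.drop (w₀.length - k), by simp [Nat.sub_sub_self h], ?_⟩
      rw [class_of_long h]
      ext u
      simp [List.IsSuffix, eq_comm]
  · rintro (⟨w, hw, rfl⟩ | ⟨w, hw, rfl⟩)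
    · refine ⟨w, ?_⟩
      rw [class_of_long hw.ge]
      ext u
      simp [List.IsSuffix, eq_comm, hw]
    · exact ⟨w, (class_of_short hw).symm⟩
end

section
/- For any alphabet A, any k ∈ ℕ, and any language L ⊆ A*, L belongs to SU_k(A) if and only if L is a union of languages having one of the two forms: A*w for some w with |w| = k, or {w} for some w with |w| ≤ k−1. -/
section

variable {A : Type*} {k : ℕ}

namespace List

theorem mem_setOf_exists_eq_append_iff {u w : List A} :
    u ∈ {u : List A | ∃ v : List A, u = v ++ w} ↔ w <:+ u :=
  exists_congr fun _ => eq_comm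

theorem rtake_suffix (u : List A) (k : ℕ) : u.rtake k <:+ u :=
  drop_suffix _ _

theorem length_rtake_of_le {u : List A} (hk : k ≤ u.length) : (u.rtake k).length = k := by
  simp only [rtake, length_drop]
  omega

theorem rtake_eq_self {u : List A} (hk : u.length ≤ k) : u.rtake k = u := by
  simp [rtake, Nat.sub_eq_zero_of_le hk]

theorem isSuffix_rtake_iff {u w : List A} (hw : w.length ≤ k) : w <:+ u.rtake k ↔ w <:+ u := by
  refine ⟨fun h => h.trans (rtake_suffix u k), fun h => suffix_of_suffix_length_le h
    (rtake_suffix u k) ?_⟩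
  simp only [rtake, length_drop]
  have := h.length_le
  omega

theorem rtake_eq_iff_isSuffix {u w : List A} (hw : w.length = k) : u.rtake k = w ↔ w <:+ u := by
  rw [suffix_iff_eq_drop, hw, rtake, eq_comm]

theorem setOf_rtake_eq_of_le {u : List A} (hk : k ≤ u.length) :
    {u' : List A | u'.rtake k = u.rtake k} =
      {u' : List A | ∃ v : List A, u' = v ++ u.rtake k} := by
  ext u'
  rw [mem_setOf_exists_eq_append_iff, Set.mem_ofPred_eq,
    rtake_eq_iff_isSuffix (length_rtake_of_le hk)]

theorem setOf_rtake_eq_of_lt {u : List A} (hk : u.length < k) :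
    {u' : List A | u'.rtake k = u.rtake k} = {u} := by
  ext u'
  rw [Set.mem_ofPred_eq, Set.mem_singleton_iff, rtake_eq_self hk.le]
  refine ⟨fun h => ?_, by rintro rfl; exact rtake_eq_self hk.le⟩
  have hu' : u'.length ≤ k := by
    by_contra! hlt
    have := length_rtake_of_le hlt.le
    rw [h] at this
    omega
  rwa [rtake_eq_self hu'] at h

end List

namespace SUk

open List

theorem mem_iff_of_rtake_eq {L : Set (List A)} (hL : SUk k L) {u u' : List A}
    (h : u.rtake k = u'.rtake k) : u ∈ L ↔ u' ∈ L := by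
  induction hL with
  | base w hw =>
    rw [mem_setOf_exists_eq_append_iff, mem_setOf_exists_eq_append_iff,
      ← isSuffix_rtake_iff hw, h, isSuffix_rtake_iff hw]
  | union _ _ ih₁ ih₂ => simp only [Set.mem_union, ih₁, ih₂]
  | inter _ _ ih₁ ih₂ => simp only [Set.mem_inter_iff, ih₁, ih₂]
  | compl _ ih => simp only [Set.mem_compl_iff, ih]

theorem eq_biUnion_setOf_rtake_eq {L : Set (List A)} (hL : SUk k L) :
    L = ⋃ u ∈ L, {u' : List A | u'.rtake k = u.rtake k} := by
  ext u'
  simp only [Set.mem_iUnion, Set.mem_ofPred_eq, exists_prop]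
  exact ⟨fun h => ⟨u', h, rfl⟩, fun ⟨u, hu, h⟩ => (hL.mem_iff_of_rtake_eq h.symm).1 hu⟩

theorem univ : SUk k (Set.univ : Set (List A)) := by
  simpa [Set.eq_univ_iff_forall] using base (A := A) (k := k) [] (Nat.zero_le k)

theorem empty : SUk k (∅ : Set (List A)) := by
  simpa using (univ (A := A) (k := k)).compl

theorem sUnion {𝒮 : Set (Set (List A))} (h𝒮 : 𝒮.Finite) (h : ∀ K ∈ 𝒮, SUk k K) :
    SUk k (⋃₀ 𝒮) := by
  induction 𝒮, h𝒮 using Set.Finite.induction_on with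
  | empty => simpa using empty
  | @insert K 𝒮 _ _ ih =>
    rw [Set.sUnion_insert]
    exact (h K (Set.mem_insert _ _)).union (ih fun K' hK' => h K' (Set.mem_insert_of_mem _ hK'))

theorem singleton [Finite A] {w : List A} (hw : w.length < k) : SUk k {w} := by
  -- `u = v ++ w` with `v ≠ []` means that `u = v' ++ a :: w` for the last letter `a` of `v`.
  have hw' : {w} = {u : List A | ∃ v : List A, u = v ++ w} ∩
      (⋃₀ Set.range fun a : A => {u : List A | ∃ v : List A, u = v ++ a :: w})ᶜ := by
    ext u
    simp only [Set.mem_singleton_iff, Set.mem_inter_iff, Set.mem_compl_iff, Set.sUnion_range,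
      Set.mem_iUnion, Set.mem_ofPred_eq, not_exists]
    constructor
    · rintro rfl
      refine ⟨⟨[], rfl⟩, fun a v hv => ?_⟩
      have := congrArg length hv
      simp at this
      omega
    · rintro ⟨⟨v, rfl⟩, hv⟩
      rcases eq_nil_or_concat v with rfl | ⟨v', a, rfl⟩
      · rfl
      · exact (hv a v' (by simp)).elim
  rw [hw']
  refine (base w hw.le).inter (sUnion (Set.finite_range _) ?_).compl
  rintro _ ⟨a, rfl⟩
  exact base (a :: w) (by simpa using hw)

end SUk

end

/-- A language `L ⊆ A*` belongs to `SUk k` if and only if it is a union of languages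
of one of the two forms: `A*w` for some `w` with `|w| = k`, or `{w}` for some `w`
with `|w| ≤ k - 1`. -/
theorem suk_iff_union (A : Type*) [Fintype A] (k : ℕ) (L : Set (List A)) :
    SUk k L ↔
      ∃ 𝒮 : Set (Set (List A)),
        (∀ K ∈ 𝒮,
          (∃ w : List A, w.length = k ∧ K = {u : List A | ∃ v : List A, u = v ++ w}) ∨
          (∃ w : List A, w.length < k ∧ K = {w})) ∧
        L = ⋃₀ 𝒮 := by
  constructor
  · intro hL
    refine ⟨(fun u => {u' : List A | u'.rtake k = u.rtake k}) '' L, ?_, ?_⟩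
    · rintro _ ⟨u, -, rfl⟩
      rcases le_or_gt k u.length with hk | hk
      · exact Or.inl ⟨u.rtake k, List.length_rtake_of_le hk, List.setOf_rtake_eq_of_le hk⟩
      · exact Or.inr ⟨u, hk, List.setOf_rtake_eq_of_lt hk⟩
    · rw [Set.sUnion_image]
      exact hL.eq_biUnion_setOf_rtake_eq
  · rintro ⟨𝒮, h𝒮, rfl⟩
    have hfin : 𝒮.Finite := by
      have hwords := List.finite_length_le A k
      refine ((hwords.image fun w => {u : List A | ∃ v : List A, u = v ++ w}).union
        (hwords.image fun w => ({w} : Set (List A)))).subset fun K hK => ?_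
      rcases h𝒮 K hK with ⟨w, hw, rfl⟩ | ⟨w, hw, rfl⟩
      · exact Or.inl ⟨w, hw.le, rfl⟩
      · exact Or.inr ⟨w, hw.le, rfl⟩
    refine SUk.sUnion hfin fun K hK => ?_
    rcases h𝒮 K hK with ⟨w, hw, rfl⟩ | ⟨w, hw, rfl⟩
    · exact SUk.base w hw.le
    · exact SUk.singleton hw
end

section
/- Let C be a lattice of languages and D a Boolean algebra of languages, with C closed under alphabetic inverse image. Then for every alphabet A, (C ∘ D)(A) is closed under finite unions and finite intersections, and contains ∅ and A*. -/
universe u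

def tagAux {A B : Type*} (blk : List A → B) : List A → List A → List (B × A)
  | _, [] => []
  | u, a :: w => (blk u, a) :: tagAux blk (u ++ [a]) w

def enrich {A : Type u} (C : ∀ B : Type u, Set (List B) → Prop)
    (D : Set (List A) → Prop) (L : Set (List A)) : Prop :=
  ∃ (P : Finset (Set (List A))) (blk : List A → Set (List A))
    (Lp : Set (List A) → Set (List (Set (List A) × A))),
    (∀ S ∈ P, D S) ∧
    (∀ u : List A, blk u ∈ P ∧ u ∈ blk u) ∧
    (∀ S T : Set (List A), S ∈ P → T ∈ P → S ≠ T → S ∩ T = ∅) ∧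
    (∀ S ∈ P, C (Set (List A) × A) (Lp S)) ∧
    L = ⋃ S ∈ (P : Set (Set (List A))), (S ∩ tagAux blk [] ⁻¹' Lp S)

lemma tagAux_map {A : Type u} {B B' : Type u} (blk : List A → B) (blk' : List A → B')
    (φ : B × A → B' × A) (h : ∀ v a, φ (blk v, a) = (blk' v, a)) :
    ∀ (w u : List A), List.map φ (tagAux blk u w) = tagAux blk' u w
  | [], _ => rfl
  | a :: w, u => by
      simp only [tagAux, List.map_cons, h, tagAux_map blk blk' φ h w]

lemma enrich_op {A : Type u} (C : ∀ B : Type u, Set (List B) → Prop)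
    (hCinv : ∀ (B B' : Type u) (φ : B → B') (L : Set (List B')),
      C B' L → C B (List.map φ ⁻¹' L))
    (m : Prop → Prop → Prop)
    (hm : ∀ (B : Type u) (S T : Set (List B)), C B S → C B T → C B {x | m (x ∈ S) (x ∈ T)})
    (D : Set (List A) → Prop)
    (hDinter : ∀ S T : Set (List A), D S → D T → D (S ∩ T))
    (L₁ L₂ : Set (List A)) (h₁ : enrich C D L₁) (h₂ : enrich C D L₂) :
    enrich C D {w | m (w ∈ L₁) (w ∈ L₂)} := by
  classical
  obtain ⟨P₁, blk₁, Lp₁, hD₁, hblk₁, hdisj₁, hC₁, hL₁⟩ := h₁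
  obtain ⟨P₂, blk₂, Lp₂, hD₂, hblk₂, hdisj₂, hC₂, hL₂⟩ := h₂
  have huniq₁ : ∀ (u : List A) (S : Set (List A)), S ∈ P₁ → u ∈ S → S = blk₁ u := by
    intro u S hS hu
    by_contra hne
    have h := hdisj₁ S (blk₁ u) hS (hblk₁ u).1 hne
    have : u ∈ S ∩ blk₁ u := ⟨hu, (hblk₁ u).2⟩
    rw [h] at this; exact this
  have huniq₂ : ∀ (u : List A) (S : Set (List A)), S ∈ P₂ → u ∈ S → S = blk₂ u := by
    intro u S hS hu
    by_contra hne
    have h := hdisj₂ S (blk₂ u) hS (hblk₂ u).1 hne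
    have : u ∈ S ∩ blk₂ u := ⟨hu, (hblk₂ u).2⟩
    rw [h] at this; exact this
  -- membership characterizations
  have memL₁ : ∀ w : List A, w ∈ L₁ ↔ tagAux blk₁ [] w ∈ Lp₁ (blk₁ w) := by
    intro w
    rw [hL₁]
    simp only [Set.mem_iUnion, Set.mem_inter_iff, Set.mem_preimage, Finset.mem_coe,
      exists_prop]
    constructor
    · rintro ⟨S, hS, hwS, hw⟩
      rwa [huniq₁ w S hS hwS] at hw
    · intro hw
      exact ⟨blk₁ w, (hblk₁ w).1, (hblk₁ w).2, hw⟩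
  have memL₂ : ∀ w : List A, w ∈ L₂ ↔ tagAux blk₂ [] w ∈ Lp₂ (blk₂ w) := by
    intro w
    rw [hL₂]
    simp only [Set.mem_iUnion, Set.mem_inter_iff, Set.mem_preimage, Finset.mem_coe,
      exists_prop]
    constructor
    · rintro ⟨S, hS, hwS, hw⟩
      rwa [huniq₂ w S hS hwS] at hw
    · intro hw
      exact ⟨blk₂ w, (hblk₂ w).1, (hblk₂ w).2, hw⟩
  -- refinement
  set blk : List A → Set (List A) := fun u => blk₁ u ∩ blk₂ u with hblkdef
  set P : Finset (Set (List A)) := Finset.image₂ (· ∩ ·) P₁ P₂ with hPdef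
  set f₁ : Set (List A) → Set (List A) :=
    fun X => if h : X.Nonempty then blk₁ h.some else blk₁ [] with hf₁def
  set f₂ : Set (List A) → Set (List A) :=
    fun X => if h : X.Nonempty then blk₂ h.some else blk₂ [] with hf₂def
  have hf₁mem : ∀ X, f₁ X ∈ P₁ := by
    intro X
    simp only [hf₁def]
    split <;> exact (hblk₁ _).1
  have hf₂mem : ∀ X, f₂ X ∈ P₂ := by
    intro X
    simp only [hf₂def]
    split <;> exact (hblk₂ _).1
  have hf₁blk : ∀ u : List A, f₁ (blk u) = blk₁ u := by
    intro u
    have hne : (blk u).Nonempty := ⟨u, (hblk₁ u).2, (hblk₂ u).2⟩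
    simp only [hf₁def, dif_pos hne]
    exact (huniq₁ hne.some (blk₁ u) (hblk₁ u).1 hne.some_mem.1).symm
  have hf₂blk : ∀ u : List A, f₂ (blk u) = blk₂ u := by
    intro u
    have hne : (blk u).Nonempty := ⟨u, (hblk₁ u).2, (hblk₂ u).2⟩
    simp only [hf₂def, dif_pos hne]
    exact (huniq₂ hne.some (blk₂ u) (hblk₂ u).1 hne.some_mem.2).symm
  set φ₁ : Set (List A) × A → Set (List A) × A := fun p => (f₁ p.1, p.2) with hφ₁def
  set φ₂ : Set (List A) × A → Set (List A) × A := fun p => (f₂ p.1, p.2) with hφ₂def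
  have htag₁ : ∀ w : List A, List.map φ₁ (tagAux blk [] w) = tagAux blk₁ [] w := by
    intro w
    exact tagAux_map blk blk₁ φ₁ (fun v a => by simp [hφ₁def, hf₁blk]) w []
  have htag₂ : ∀ w : List A, List.map φ₂ (tagAux blk [] w) = tagAux blk₂ [] w := by
    intro w
    exact tagAux_map blk blk₂ φ₂ (fun v a => by simp [hφ₂def, hf₂blk]) w []
  set Lp : Set (List A) → Set (List (Set (List A) × A)) :=
    fun S => {x | m (x ∈ List.map φ₁ ⁻¹' Lp₁ (f₁ S)) (x ∈ List.map φ₂ ⁻¹' Lp₂ (f₂ S))}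
    with hLpdef
  refine ⟨P, blk, Lp, ?_, ?_, ?_, ?_, ?_⟩
  · intro S hS
    obtain ⟨S₁, hS₁, S₂, hS₂, rfl⟩ := Finset.mem_image₂.mp hS
    exact hDinter _ _ (hD₁ _ hS₁) (hD₂ _ hS₂)
  · intro u
    refine ⟨Finset.mem_image₂.mpr ⟨blk₁ u, (hblk₁ u).1, blk₂ u, (hblk₂ u).1, rfl⟩,
      (hblk₁ u).2, (hblk₂ u).2⟩
  · intro S T hS hT hne
    obtain ⟨S₁, hS₁, S₂, hS₂, rfl⟩ := Finset.mem_image₂.mp hS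
    obtain ⟨T₁, hT₁, T₂, hT₂, rfl⟩ := Finset.mem_image₂.mp hT
    by_cases h1 : S₁ = T₁
    · have h2 : S₂ ≠ T₂ := fun h => hne (by rw [h1, h])
      have := hdisj₂ S₂ T₂ hS₂ hT₂ h2
      apply Set.eq_empty_of_subset_empty
      rw [← this]
      exact fun x hx => ⟨hx.1.2, hx.2.2⟩
    · have := hdisj₁ S₁ T₁ hS₁ hT₁ h1
      apply Set.eq_empty_of_subset_empty
      rw [← this]
      exact fun x hx => ⟨hx.1.1, hx.2.1⟩
  · intro S _
    exact hm _ _ _ (hCinv _ _ φ₁ _ (hC₁ _ (hf₁mem S))) (hCinv _ _ φ₂ _ (hC₂ _ (hf₂mem S)))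
  · ext w
    simp only [Set.mem_setOf_eq, Set.mem_iUnion, Set.mem_inter_iff, Set.mem_preimage,
      Finset.mem_coe, exists_prop]
    have hbmem : blk w ∈ P :=
      Finset.mem_image₂.mpr ⟨blk₁ w, (hblk₁ w).1, blk₂ w, (hblk₂ w).1, rfl⟩
    have hbuniq : ∀ S : Set (List A), S ∈ P → w ∈ S → S = blk w := by
      intro S hS hw
      obtain ⟨S₁, hS₁, S₂, hS₂, rfl⟩ := Finset.mem_image₂.mp hS
      rw [huniq₁ w S₁ hS₁ hw.1, huniq₂ w S₂ hS₂ hw.2]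
    have key : tagAux blk [] w ∈ Lp (blk w) ↔ m (w ∈ L₁) (w ∈ L₂) := by
      simp only [hLpdef, Set.mem_setOf_eq, Set.mem_preimage, htag₁, htag₂,
        hf₁blk, hf₂blk]
      rw [memL₁ w, memL₂ w]
    constructor
    · intro hmw
      exact ⟨blk w, hbmem, ⟨(hblk₁ w).2, (hblk₂ w).2⟩, key.mpr hmw⟩
    · rintro ⟨S, hS, hwS, hw⟩
      rw [hbuniq S hS hwS] at hw
      exact key.mp hw

/-- If `C` is a lattice of languages closed under alphabetic inverse image and `D` is a
Boolean algebra of languages over `A`, then `(C ∘ D)(A)` is closed under finite unions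
and intersections and contains `∅` and `A*`. -/
theorem enrich_lattice {A : Type u} (C : ∀ B : Type u, Set (List B) → Prop)
    (hCunion : ∀ (B : Type u) (S T : Set (List B)), C B S → C B T → C B (S ∪ T))
    (hCinter : ∀ (B : Type u) (S T : Set (List B)), C B S → C B T → C B (S ∩ T))
    (hCempty : ∀ B : Type u, C B (∅ : Set (List B)))
    (hCuniv : ∀ B : Type u, C B (Set.univ : Set (List B)))
    (hCinv : ∀ (B B' : Type u) (φ : B → B') (L : Set (List B')),
      C B' L → C B (List.map φ ⁻¹' L))
    (D : Set (List A) → Prop)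
    (hDunion : ∀ S T : Set (List A), D S → D T → D (S ∪ T))
    (hDinter : ∀ S T : Set (List A), D S → D T → D (S ∩ T))
    (hDcompl : ∀ S : Set (List A), D S → D Sᶜ)
    (hDempty : D (∅ : Set (List A)))
    (hDuniv : D (Set.univ : Set (List A))) :
    (∀ L₁ L₂ : Set (List A), enrich C D L₁ → enrich C D L₂ → enrich C D (L₁ ∪ L₂)) ∧
    (∀ L₁ L₂ : Set (List A), enrich C D L₁ → enrich C D L₂ → enrich C D (L₁ ∩ L₂)) ∧
    enrich C D (∅ : Set (List A)) ∧
    enrich C D (Set.univ : Set (List A)) := by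
  classical
  have hEasy : ∀ Lp0 : Set (List (Set (List A) × A)),
      C (Set (List A) × A) Lp0 →
      enrich C D (Set.univ ∩ tagAux (fun _ => (Set.univ : Set (List A))) [] ⁻¹' Lp0) := by
    intro Lp0 hLp0
    refine ⟨{Set.univ}, fun _ => Set.univ, fun _ => Lp0, ?_, ?_, ?_, ?_, ?_⟩
    · intro S hS; rw [Finset.mem_singleton] at hS; rw [hS]; exact hDuniv
    · intro u; exact ⟨Finset.mem_singleton_self _, Set.mem_univ u⟩
    · intro S T hS hT hne
      rw [Finset.mem_singleton] at hS hT
      exact absurd (hS.trans hT.symm) hne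
    · intro S _; exact hLp0
    · ext w
      simp only [Set.mem_iUnion, Finset.coe_singleton, Set.mem_singleton_iff,
        exists_prop, exists_eq_left, Set.mem_inter_iff, Set.mem_preimage,
        Set.mem_univ, true_and]
  have hEmpty : enrich C D (∅ : Set (List A)) := by
    have := hEasy ∅ (hCempty _)
    simpa using this
  have hUniv : enrich C D (Set.univ : Set (List A)) := by
    have := hEasy Set.univ (hCuniv _)
    simpa using this
  refine ⟨?_, ?_, hEmpty, hUniv⟩
  · intro L₁ L₂ h₁ h₂
    have := enrich_op C hCinv Or
      (fun B S T hS hT => by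
        have : {x : List B | x ∈ S ∨ x ∈ T} = S ∪ T := rfl
        rw [this]; exact hCunion B S T hS hT)
      D hDinter L₁ L₂ h₁ h₂
    have e : {w : List A | w ∈ L₁ ∨ w ∈ L₂} = L₁ ∪ L₂ := rfl
    rwa [e] at this
  · intro L₁ L₂ h₁ h₂
    have := enrich_op C hCinv And
      (fun B S T hS hT => by
        have : {x : List B | x ∈ S ∧ x ∈ T} = S ∩ T := rfl
        rw [this]; exact hCinter B S T hS hT)
      D hDinter L₁ L₂ h₁ h₂
    have e : {w : List A | w ∈ L₁ ∧ w ∈ L₂} = L₁ ∩ L₂ := rfl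
    rwa [e] at this
end

section
/- Let α : (A⁺, A^ω) → (S_+, S_ω) be a morphism into a finite ω-semigroup and let k = 2^{3|S_+|}. Then for every infinite word w ∈ A^ω and every position y ≥ k−1 of w, there exists a position x with y−(k−1) ≤ x ≤ y such that the k-type of x (the infix w[x−k, x−1], or the prefix w[0,x−1] if x < k) has a nonempty suffix v with α(v) idempotent. Consequently w contains infinitely many such distinguished positions. -/
/-!
Only a weak form of Simon's theorem is needed: every word `u` of length at least `2 ^ |S|`
has a nonempty infix with idempotent image. For `1 ≤ i ≤ |u|` let `P i` be the set of images
of the nonempty infixes ending at `i`. These `2 ^ |S|` sets are nonempty subsets of `S`, so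
`P i = P i'` for some `i < i'`; with `x` the image of `u[i, i')`, the set `P i` contains `x`
and is closed under right multiplication by `x`, hence contains an idempotent of the finite
semigroup generated by `x`. Applied to the `2 ^ |S| < k` letters before `y`, this yields a
distinguished position in the window `[y - (k - 1), y]`.
-/

/-- The `k`-type of position `x` in the infinite word `w : ℕ → A`: the word of length
`min x k` immediately preceding `x`, i.e. the prefix `w[0,x-1]` if `x < k` and the
infix `w[x-k,x-1]` otherwise. -/
def ktypeInf {A : Type*} (k : ℕ) (w : ℕ → A) (x : ℕ) : List A :=
  if x < k then List.ofFn fun i : Fin x => w i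
  else List.ofFn fun i : Fin k => w (x - k + i)

theorem exists_idempotent_of_mul_mem {S : Type*} [Semigroup S] [Finite S] {T : Set S} {x : S}
    (hx : x ∈ T) (hTx : ∀ t ∈ T, t * x ∈ T) : ∃ e ∈ T, e * e = e := by
  let : TopologicalSpace S := ⊥
  have : DiscreteTopology S := ⟨rfl⟩
  -- The right stabiliser of `T` inside `T` is a nonempty subsemigroup.
  obtain ⟨e, he, hee⟩ := exists_idempotent_in_compact_subsemigroup
    (fun _ => continuous_of_discreteTopology) {y ∈ T | ∀ t ∈ T, t * y ∈ T} ⟨x, hx, hTx⟩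
    (Set.toFinite _).isCompact
    (fun y hy y' hy' => ⟨hy'.2 y hy.1, fun t ht => mul_assoc t y y' ▸ hy'.2 _ (hy.2 t ht)⟩)
  exact ⟨e, he.1, hee⟩

theorem exists_idempotent_of_two_pow_card_le {S : Type*} [Semigroup S] [Fintype S]
    (f : ℕ → ℕ → S) (hf : ∀ j i l, j < i → i < l → f j l = f j i * f i l) {a b : ℕ}
    (hab : a + 2 ^ Fintype.card S ≤ b) :
    ∃ j i, a ≤ j ∧ j < i ∧ i ≤ b ∧ f j i * f j i = f j i := by
  classical
  set P : ℕ → Finset S := fun i => (Finset.Ico a i).image (f · i)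
  have hcard :
      ((Finset.univ : Finset (Finset S)).erase ∅).card < (Finset.Icc (a + 1) b).card := by
    rw [Finset.card_erase_of_mem (Finset.mem_univ _), Finset.card_univ, Fintype.card_finset,
      Nat.card_Icc]
    have := Nat.one_le_two_pow (n := Fintype.card S)
    omega
  have hmaps :
      ∀ i ∈ Finset.Icc (a + 1) b, P i ∈ (Finset.univ : Finset (Finset S)).erase ∅ := by
    intro i hi
    rw [Finset.mem_Icc] at hi
    refine Finset.mem_erase.2 ⟨Finset.nonempty_iff_ne_empty.1 ?_, Finset.mem_univ _⟩
    exact (Finset.nonempty_Ico.2 (by omega)).image _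
  obtain ⟨i, hi, i', hi', hne, heq⟩ := Finset.exists_ne_map_eq_of_card_lt_of_maps_to hcard hmaps
  wlog hii' : i < i' generalizing i i'
  · exact this i' hi' i hi hne.symm heq.symm (by omega)
  rw [Finset.mem_Icc] at hi hi'
  have hx : f i i' ∈ P i :=
    heq ▸ Finset.mem_image_of_mem _ (Finset.mem_Ico.2 ⟨by omega, hii'⟩)
  have hTx : ∀ t ∈ P i, t * f i i' ∈ P i := by
    intro t ht
    obtain ⟨j, hj, rfl⟩ := Finset.mem_image.1 ht
    rw [Finset.mem_Ico] at hj
    exact heq ▸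
      Finset.mem_image.2 ⟨j, Finset.mem_Ico.2 ⟨hj.1, by omega⟩, hf j i i' hj.2 hii'⟩
  obtain ⟨e, he, hee⟩ := exists_idempotent_of_mul_mem (T := (P i : Set S)) hx hTx
  obtain ⟨j, hj, rfl⟩ := Finset.mem_image.1 he
  rw [Finset.mem_Ico] at hj
  exact ⟨j, i, hj.1, hj.2, hi.2, hee⟩

def wordInfix {A : Type*} (w : ℕ → A) (a b : ℕ) : List A :=
  List.ofFn fun i : Fin (b - a) => w (a + i)

section wordInfix

variable {A : Type*} (w : ℕ → A)

theorem wordInfix_ne_nil {a b : ℕ} (h : a < b) : wordInfix w a b ≠ [] := by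
  simpa [wordInfix] using Nat.sub_ne_zero_of_lt h

theorem wordInfix_append {a b c : ℕ} (hab : a ≤ b) (hbc : b ≤ c) :
    wordInfix w a b ++ wordInfix w b c = wordInfix w a c := by
  refine List.ext_getElem
    (by simp only [wordInfix, List.length_append, List.length_ofFn]; omega) fun n _ _ => ?_
  simp only [wordInfix, List.getElem_append, List.length_ofFn, List.getElem_ofFn]
  split_ifs
  · rfl
  · congr 1; omega

theorem wordInfix_isSuffix {a b c : ℕ} (hab : a ≤ b) (hbc : b ≤ c) :
    wordInfix w b c <:+ wordInfix w a c :=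
  wordInfix_append w hab hbc ▸ List.suffix_append _ _

-- For `x < k` the truncated subtraction gives `x - k = 0`, so the prefix case is covered too.
theorem ktypeInf_eq_wordInfix (k x : ℕ) : ktypeInf k w x = wordInfix w (x - k) x := by
  unfold ktypeInf wordInfix
  refine List.ext_getElem (by split_ifs <;> simp only [List.length_ofFn] <;> omega)
    fun n _ _ => ?_
  split_ifs <;> simp only [List.getElem_ofFn]
  congr 1
  omega

end wordInfix

theorem distinguished_exists_infinite_general {A Sp : Type*} [Semigroup Sp] [Fintype Sp]
    (α : List A → Sp)
    (hα : ∀ u v : List A, u ≠ [] → v ≠ [] → α (u ++ v) = α u * α v)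
    (k : ℕ) (hk : k = 2 ^ (3 * Fintype.card Sp))
    (w : ℕ → A) :
    (∀ y : ℕ, k - 1 ≤ y →
      ∃ x : ℕ, y - (k - 1) ≤ x ∧ x ≤ y ∧
        ∃ v : List A, v ≠ [] ∧ v <:+ ktypeInf k w x ∧ α v * α v = α v) ∧
    (∀ N : ℕ, ∃ x : ℕ, N ≤ x ∧
      ∃ v : List A, v ≠ [] ∧ v <:+ ktypeInf k w x ∧ α v * α v = α v) := by
  have : Nonempty Sp := ⟨α []⟩
  have hck : 2 ^ Fintype.card Sp < k :=
    hk ▸ Nat.pow_lt_pow_right (by norm_num) (by have := Fintype.card_pos (α := Sp); omega)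
  have hmul : ∀ j i l, j < i → i < l →
      α (wordInfix w j l) = α (wordInfix w j i) * α (wordInfix w i l) := fun j i l hji hil => by
    rw [← wordInfix_append w hji.le hil.le,
      hα _ _ (wordInfix_ne_nil w hji) (wordInfix_ne_nil w hil)]
  have hwindow : ∀ y : ℕ, k - 1 ≤ y →
      ∃ x : ℕ, y - (k - 1) ≤ x ∧ x ≤ y ∧
        ∃ v : List A, v ≠ [] ∧ v <:+ ktypeInf k w x ∧ α v * α v = α v := by
    intro y hy
    obtain ⟨j, x, hj, hjx, hxy, hidem⟩ :=
      exists_idempotent_of_two_pow_card_le _ hmul (a := y - 2 ^ Fintype.card Sp) (b := y)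
        (by omega)
    refine ⟨x, by omega, hxy, wordInfix w j x, wordInfix_ne_nil w hjx, ?_, hidem⟩
    rw [ktypeInf_eq_wordInfix]
    exact wordInfix_isSuffix w (by omega) hjx.le
  refine ⟨hwindow, fun N => ?_⟩
  obtain ⟨x, hNx, -, hx⟩ := hwindow (N + (k - 1)) (by omega)
  exact ⟨x, by omega, hx⟩

/-- Let `α` be (the finite-word part of) a morphism into a finite ω-semigroup, with
finite semigroup part `Sp`, and let `k = 2^(3|Sp|)`. Assuming the consequence of
Simon's factorization forest theorem (every word of length ≥ k has a nonempty infix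
whose image is idempotent), every position `y ≥ k-1` of an infinite word `w` admits a
distinguished position `x` with `y-(k-1) ≤ x ≤ y` — i.e. the `k`-type of `x` has a
nonempty suffix `v` with `α v` idempotent — and consequently `w` contains infinitely
many distinguished positions. -/
theorem distinguished_exists_infinite {A Sp : Type*} [Semigroup Sp] [Fintype Sp]
    (α : List A → Sp)
    (hα : ∀ u v : List A, u ≠ [] → v ≠ [] → α (u ++ v) = α u * α v)
    (k : ℕ) (hk : k = 2 ^ (3 * Fintype.card Sp))
    (hSimon : ∀ v : List A, k ≤ v.length →
      ∃ t : List A, t ≠ [] ∧ t <:+: v ∧ α t * α t = α t)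
    (w : ℕ → A) :
    (∀ y : ℕ, k - 1 ≤ y →
      ∃ x : ℕ, y - (k - 1) ≤ x ∧ x ≤ y ∧
        ∃ v : List A, v ≠ [] ∧ v <:+ ktypeInf k w x ∧ α v * α v = α v) ∧
    (∀ N : ℕ, ∃ x : ℕ, N ≤ x ∧
      ∃ v : List A, v ≠ [] ∧ v <:+ ktypeInf k w x ∧ α v * α v = α v) :=
  distinguished_exists_infinite_general α hα k hk w
end

section
/- Let (S_+, S_ω) be a finite ω-semigroup and (s_i)_{i≥1} a sequence in S_+. Then there exist an element s ∈ S_+, an idempotent f ∈ S_+, and indices i_1 < i_2 < ⋯ such that s_1⋯s_{i_1} = s, s_{i_{j−1}+1}⋯s_{i_j} = f for all j > 1, and s·f = s; consequently the infinite product s_1 s_2 s_3 ⋯ in S_ω equals s·f^ω. -/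
/-!
Colour each pair `i < j` by the prefix product `s₀ ⋯ sᵢ` together with the block product
`sᵢ₊₁ ⋯ sⱼ`. By Ramsey's theorem some infinite set `φ 0 < φ 1 < ⋯` is monochromatic, of colour
`(s, f)`. Since blocks multiply, `f = f * f` and `s = s * f`, and grouping the infinite product
along the `φ j` gives `s · f^ω`.

Ramsey's theorem is proved with a nonprincipal ultrafilter `U` on `ℕ`: each `i` has a
`U`-typical colour `col i` of the pairs `(i, j)`, and `col` is itself `U`-almost constant.
-/

/-- `seg f i n` : the (nonempty) finite product `f i * f (i+1) * ⋯ * f (i+n)`. -/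
def seg {S : Type*} [Semigroup S] (f : ℕ → S) (i : ℕ) : ℕ → S
  | 0 => f i
  | n + 1 => f i * seg f (i + 1) n

/-- An ω-semigroup structure on a semigroup `Sp` and a set `Sw`: a mixed product
`Sp × Sw → Sw` and an infinite product `(Sp)^ω → Sw`, satisfying all forms of
associativity. -/
structure OmegaSemigroup (Sp : Type*) [Semigroup Sp] (Sw : Type*) where
  mixed : Sp → Sw → Sw
  iprod : (ℕ → Sp) → Sw
  mixed_assoc : ∀ (s t : Sp) (x : Sw), mixed (s * t) x = mixed s (mixed t x)
  iprod_cons : ∀ f : ℕ → Sp, iprod f = mixed (f 0) (iprod fun n => f (n + 1))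
  iprod_assoc : ∀ (f : ℕ → Sp) (φ : ℕ → ℕ), StrictMono φ → φ 0 = 0 →
    iprod f = iprod fun n => seg f (φ n) (φ (n + 1) - φ n - 1)

open Filter

theorem Filter.exists_strictMono_pairwise_of_eventually {L : Filter ℕ} [L.NeBot]
    (hL : L ≤ atTop) {s : Set ℕ} {R : ℕ → ℕ → Prop} (hs : s ∈ L)
    (hR : ∀ i, ∀ᶠ j in L, R i j) :
    ∃ φ : ℕ → ℕ, StrictMono φ ∧ (∀ n, φ n ∈ s) ∧ ∀ m n, m < n → R (φ m) (φ n) := by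
  let pick (B : {B : Set ℕ // B ∈ L}) : ℕ := (L.nonempty_of_mem B.2).some
  let next (B : {B : Set ℕ // B ∈ L}) : {B : Set ℕ // B ∈ L} :=
    ⟨B.1 ∩ {j | pick B < j ∧ R (pick B) j}, inter_mem B.2
      ((show ∀ᶠ j in L, pick B < j from hL (Ioi_mem_atTop _)).and (hR _))⟩
  let B (n : ℕ) : {B : Set ℕ // B ∈ L} := next^[n] ⟨s, hs⟩
  have hB : Antitone fun n => (B n).1 := antitone_nat_of_succ_le fun n => by
    simp only [B, Function.iterate_succ_apply']
    exact Set.inter_subset_left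
  have hpick (n : ℕ) : pick (B n) ∈ (B n).1 := (L.nonempty_of_mem (B n).2).some_mem
  have hlater (m n : ℕ) (hmn : m < n) :
      pick (B m) < pick (B n) ∧ R (pick (B m)) (pick (B n)) := by
    have h := hB (Nat.succ_le_of_lt hmn) (hpick n)
    simp only [B, Function.iterate_succ_apply'] at h
    exact h.2
  exact ⟨fun n => pick (B n), fun m n h => (hlater m n h).1,
    fun n => hB (Nat.zero_le n) (hpick n), fun m n h => (hlater m n h).2⟩

theorem Ultrafilter.exists_eventually_eq {β α : Type*} [Finite α] (U : Ultrafilter β)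
    (g : β → α) : ∃ c, ∀ᶠ x in (U : Filter β), g x = c := by
  obtain ⟨c, hc⟩ := (U.map g).eq_pure_of_finite
  exact ⟨c, show ∀ᶠ a in (U.map g : Filter α), a = c by rw [hc]; exact eventually_pure.2 rfl⟩

theorem exists_strictMono_monochromatic {α : Type*} [Finite α] (C : ℕ → ℕ → α) :
    ∃ (c : α) (φ : ℕ → ℕ), StrictMono φ ∧ ∀ m n, m < n → C (φ m) (φ n) = c := by
  choose col hcol using fun i => (hyperfilter ℕ).exists_eventually_eq (C i)
  obtain ⟨c, hc⟩ := (hyperfilter ℕ).exists_eventually_eq col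
  obtain ⟨φ, hφ, hφc, hφC⟩ :=
    exists_strictMono_pairwise_of_eventually Nat.hyperfilter_le_atTop hc hcol
  exact ⟨c, φ, hφ, fun m n h => (hφC m n h).trans (hφc m)⟩

section Segments

variable {S : Type*} [Semigroup S] (f : ℕ → S)

theorem seg_mul_seg (i m n : ℕ) : seg f i m * seg f (i + m + 1) n = seg f i (m + n + 1) := by
  induction m generalizing i with
  | zero => simp [seg]
  | succ m ih =>
    calc seg f i (m + 1) * seg f (i + (m + 1) + 1) n
        = f i * (seg f (i + 1) m * seg f (i + 1 + m + 1) n) := by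
          rw [seg, mul_assoc, show i + (m + 1) + 1 = i + 1 + m + 1 by omega]
      _ = f i * seg f (i + 1) (m + n + 1) := by rw [ih]
      _ = seg f i (m + 1 + n + 1) := by rw [show m + 1 + n + 1 = m + n + 1 + 1 by omega]; rfl

/-- The block product `f (i + 1) * ⋯ * f j`; for `j ≤ i` the truncated subtraction makes it
the junk value `f (i + 1)`. -/
def blockProd (i j : ℕ) : S := seg f (i + 1) (j - i - 1)

theorem blockProd_mul_blockProd {i j k : ℕ} (hij : i < j) (hjk : j < k) :
    blockProd f i j * blockProd f j k = blockProd f i k := by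
  have h := seg_mul_seg f (i + 1) (j - i - 1) (k - j - 1)
  rwa [show i + 1 + (j - i - 1) + 1 = j + 1 by omega,
    show j - i - 1 + (k - j - 1) + 1 = k - i - 1 by omega] at h

theorem seg_zero_mul_blockProd {i j : ℕ} (hij : i < j) :
    seg f 0 i * blockProd f i j = seg f 0 j := by
  have h := seg_mul_seg f 0 i (j - i - 1)
  rwa [zero_add, show i + (j - i - 1) + 1 = j by omega] at h

end Segments

theorem OmegaSemigroup.iprod_eq_mixed_seg_blockProd {Sp Sw : Type*} [Semigroup Sp]
    (W : OmegaSemigroup Sp Sw) (f : ℕ → Sp) {φ : ℕ → ℕ} (hφ : StrictMono φ) :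
    W.iprod f = W.mixed (seg f 0 (φ 0)) (W.iprod fun n => blockProd f (φ n) (φ (n + 1))) := by
  -- cut points `0, φ 0 + 1, φ 1 + 1, …`: the first piece is the prefix, the others the blocks
  let cuts : ℕ → ℕ := fun n => Nat.rec 0 (fun m _ => φ m + 1) n
  have hcuts : StrictMono cuts := strictMono_nat_of_lt_succ fun n => by
    cases n with
    | zero => exact Nat.succ_pos (φ 0)
    | succ m => exact Nat.succ_lt_succ (hφ (Nat.lt_succ_self m))
  rw [W.iprod_assoc f cuts hcuts rfl, W.iprod_cons]
  congr 2
  funext n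
  show seg f (φ n + 1) (φ (n + 1) + 1 - (φ n + 1) - 1) = seg f (φ n + 1) (φ (n + 1) - φ n - 1)
  rw [show φ (n + 1) + 1 - (φ n + 1) - 1 = φ (n + 1) - φ n - 1 by omega]

theorem ramsey_factorization_general {Sp Sw : Type*} [Semigroup Sp] [Fintype Sp]
    (W : OmegaSemigroup Sp Sw) (sq : ℕ → Sp) :
    ∃ (s f : Sp) (φ : ℕ → ℕ), StrictMono φ ∧
      seg sq 0 (φ 0) = s ∧
      (∀ j : ℕ, seg sq (φ j + 1) (φ (j + 1) - φ j - 1) = f) ∧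
      f * f = f ∧ s * f = s ∧
      W.iprod sq = W.mixed s (W.iprod fun _ => f) := by
  obtain ⟨⟨s, f⟩, φ, hφ, hcol⟩ :=
    exists_strictMono_monochromatic fun i j => (seg sq 0 i, blockProd sq i j)
  have hs (m : ℕ) : seg sq 0 (φ m) = s := (Prod.ext_iff.1 (hcol m (m + 1) m.lt_succ_self)).1
  have hf {m n : ℕ} (h : m < n) : blockProd sq (φ m) (φ n) = f := (Prod.ext_iff.1 (hcol m n h)).2
  have hblock (j : ℕ) : blockProd sq (φ j) (φ (j + 1)) = f := hf j.lt_succ_self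
  refine ⟨s, f, φ, hφ, hs 0, hblock, ?_, ?_, ?_⟩
  · calc f * f = blockProd sq (φ 0) (φ 1) * blockProd sq (φ 1) (φ 2) := by
          rw [hf zero_lt_one, hf one_lt_two]
      _ = f := by rw [blockProd_mul_blockProd sq (hφ zero_lt_one) (hφ one_lt_two), hf zero_lt_two]
  · calc s * f = seg sq 0 (φ 0) * blockProd sq (φ 0) (φ 1) := by rw [hs 0, hf zero_lt_one]
      _ = s := by rw [seg_zero_mul_blockProd sq (hφ zero_lt_one), hs 1]
  · rw [W.iprod_eq_mixed_seg_blockProd sq hφ, hs 0]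
    simp only [hblock]

/-- Ramsey-type factorization: for every sequence `(sq i)` in the finite semigroup
part `Sp` of a finite ω-semigroup, there are `s ∈ Sp`, an idempotent `f ∈ Sp` and
indices `i₁ < i₂ < ⋯` (given by a strictly monotone `φ`) such that
`sq 0 ⋯ sq i₁ = s`, each block product `sq (i_j + 1) ⋯ sq i_{j+1}` equals `f`,
`s·f = s`, and consequently the infinite product of `(sq i)` equals `s·f^ω`. -/
theorem ramsey_factorization {Sp Sw : Type*} [Semigroup Sp] [Fintype Sp] [Fintype Sw]
    (W : OmegaSemigroup Sp Sw) (sq : ℕ → Sp) :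
    ∃ (s f : Sp) (φ : ℕ → ℕ), StrictMono φ ∧
      seg sq 0 (φ 0) = s ∧
      (∀ j : ℕ, seg sq (φ j + 1) (φ (j + 1) - φ j - 1) = f) ∧
      f * f = f ∧ s * f = s ∧
      W.iprod sq = W.mixed s (W.iprod fun _ => f) :=
  ramsey_factorization_general W sq
end
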